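/- For every θ ∈ S₀ (i.e. ‖θ‖₂ = 1 and Σ_i θ_i = 0) one has Γ(Ψ(θ)) = θ; i.e. (Ψ(θ) − C)/‖Ψ(θ) − C‖₂ = θ. In particular Γ maps ∂Δ onto S₀. -/

import Mathlib

/-!
`Ψ(θ) - C = -θ / m` with `m = min_i θ_i / c_i`, and `m < 0` because a nonzero vector with
zero sum has a negative coordinate. So `Ψ(θ) - C` is a positive multiple of the unit vector `θ`,
which `Γ` normalises back to `θ`. The factor `-1/m` is exactly the largest step from `C` along
`θ` that stays in the nonnegative orthant, so `Ψ(θ)` has a zero coordinate; its coordinates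
still sum to `Σ c_i = 1` since `Σ θ_i = 0`.
-/

open scoped BigOperators

/-- The map `Γ(β) = (β - C)/‖β - C‖₂`. -/
noncomputable def Gamma (V : ℕ) (C β : EuclideanSpace ℝ (Fin V)) :
    EuclideanSpace ℝ (Fin V) :=
  ‖β - C‖⁻¹ • (β - C)

/-- The map `Ψ(θ) = -θ/(min_i θ_i/c_i) + C`. -/
noncomputable def Psi (V : ℕ) (hV : 0 < V) (C θ : EuclideanSpace ℝ (Fin V)) :
    EuclideanSpace ℝ (Fin V) :=
  (-(Finset.univ.inf' ⟨⟨0, hV⟩, Finset.mem_univ _⟩ fun i => θ i / C i)⁻¹) • θ + C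

open Finset

lemma exists_neg_of_sum_eq_zero {ι : Type*} [Fintype ι] {f : ι → ℝ} (hf : f ≠ 0)
    (hsum : ∑ i, f i = 0) : ∃ i, f i < 0 := by
  by_contra! hnonneg
  exact hf (funext fun i =>
    (sum_eq_zero_iff_of_nonneg fun i _ => hnonneg i).1 hsum i (mem_univ i))

lemma Gamma_smul_add_self {V : ℕ} (C θ : EuclideanSpace ℝ (Fin V)) {a : ℝ} (ha : 0 < a) :
    Gamma V C (a • θ + C) = ‖θ‖⁻¹ • θ := by
  rw [Gamma, add_sub_cancel_right, norm_smul, Real.norm_of_nonneg ha.le, mul_inv_rev, smul_smul,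
    mul_assoc, inv_mul_cancel₀ ha.ne', mul_one]

section MinRatio

variable {V : ℕ} (hV : 0 < V) {C θ : EuclideanSpace ℝ (Fin V)}

noncomputable def minRatio (C θ : EuclideanSpace ℝ (Fin V)) : ℝ :=
  univ.inf' ⟨⟨0, hV⟩, mem_univ _⟩ fun i => θ i / C i

lemma minRatio_le (i : Fin V) : minRatio hV C θ ≤ θ i / C i :=
  inf'_le _ (mem_univ i)

lemma exists_minRatio_eq : ∃ i, minRatio hV C θ = θ i / C i := by
  obtain ⟨i, -, hi⟩ := exists_mem_eq_inf' ⟨⟨0, hV⟩, mem_univ _⟩ fun i => θ i / C i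
  exact ⟨i, hi⟩

lemma minRatio_neg (hC : ∀ i, 0 < C i) (hθ : ∃ i, θ i < 0) : minRatio hV C θ < 0 := by
  obtain ⟨i, hi⟩ := hθ
  exact (minRatio_le hV i).trans_lt (div_neg_of_neg_of_pos hi (hC i))

lemma Psi_eq_smul_add : Psi V hV C θ = (-(minRatio hV C θ)⁻¹) • θ + C := rfl

lemma Psi_apply (i : Fin V) : Psi V hV C θ i = C i - θ i / minRatio hV C θ := by
  rw [Psi_eq_smul_add, PiLp.add_apply, PiLp.smul_apply, smul_eq_mul]
  ring

lemma Psi_nonneg (hC : ∀ i, 0 < C i) (hm : minRatio hV C θ < 0) (i : Fin V) :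
    0 ≤ Psi V hV C θ i := by
  have hle : minRatio hV C θ * C i ≤ θ i := (le_div_iff₀ (hC i)).1 (minRatio_le hV i)
  rw [Psi_apply, sub_nonneg, div_le_iff_of_neg hm, mul_comm]
  exact hle

lemma sum_Psi : ∑ i, Psi V hV C θ i = ∑ i, C i - (∑ i, θ i) / minRatio hV C θ := by
  simp only [Psi_apply, sum_sub_distrib, sum_div]

lemma exists_Psi_eq_zero (hm : minRatio hV C θ ≠ 0) :
    ∃ i, Psi V hV C θ i = 0 := by
  obtain ⟨i, hi⟩ := exists_minRatio_eq hV (C := C) (θ := θ)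
  have hθi : θ i ≠ 0 := fun h => hm (by rw [hi, h, zero_div])
  refine ⟨i, ?_⟩
  rw [Psi_apply, hi, div_div_cancel₀ hθi, sub_self]

end MinRatio

/-- For every `θ ∈ S₀` one has `Γ(Ψ(θ)) = θ`; in particular `Γ`
maps `∂Δ` onto `S₀`. -/
theorem stmt3 (V : ℕ) (hV : 2 ≤ V) (C : EuclideanSpace ℝ (Fin V))
    (hC0 : ∀ i, 0 < C i) (hC1 : ∑ i, C i = 1) :
    (∀ θ : EuclideanSpace ℝ (Fin V), ‖θ‖ = 1 → (∑ i, θ i) = 0 →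
        Gamma V C (Psi V (by omega) C θ) = θ) ∧
    Set.SurjOn (Gamma V C)
      {β : EuclideanSpace ℝ (Fin V) |
        (∀ i, 0 ≤ β i) ∧ (∑ i, β i) = 1 ∧ ∃ i, β i = 0}
      {θ : EuclideanSpace ℝ (Fin V) | ‖θ‖ = 1 ∧ (∑ i, θ i) = 0} := by
  have hV0 : 0 < V := by omega
  have hm : ∀ θ : EuclideanSpace ℝ (Fin V), ‖θ‖ = 1 → ∑ i, θ i = 0 →
      minRatio hV0 C θ < 0 := by
    intro θ hnorm hsum
    have hθ : ⇑θ ≠ 0 := by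
      rw [Ne, WithLp.ofLp_eq_zero]
      rintro rfl
      simp at hnorm
    exact minRatio_neg hV0 hC0 (exists_neg_of_sum_eq_zero hθ hsum)
  have hGamma : ∀ θ : EuclideanSpace ℝ (Fin V), ‖θ‖ = 1 → ∑ i, θ i = 0 →
      Gamma V C (Psi V hV0 C θ) = θ := by
    intro θ hnorm hsum
    rw [Psi_eq_smul_add, Gamma_smul_add_self C θ (neg_pos.2 (inv_lt_zero.2 (hm θ hnorm hsum))),
      hnorm, inv_one, one_smul]
  refine ⟨hGamma, fun θ ⟨hnorm, hsum⟩ =>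
    ⟨Psi V hV0 C θ, ⟨?_, ?_, ?_⟩, hGamma θ hnorm hsum⟩⟩
  · exact Psi_nonneg hV0 hC0 (hm θ hnorm hsum)
  · rw [sum_Psi, hsum, zero_div, sub_zero, hC1]
  · exact exists_Psi_eq_zero hV0 (hm θ hnorm hsum).ne
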